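/- arXiv:hep-th/0512131 — 4 statements merged into one kernel-verified Lean document; each statement's English description precedes it below -/
import Mathlib

section
/- Antisymmetry of ν: for any two measure densities ρ₁, ρ₂ and fixed antisymplectic structure E, ν(ρ₁;ρ₂,E) + ν(ρ₂;ρ₁,E) = 0, and ν(ρ;ρ,E) = 0. -/
/-- Partial derivative of a function on `ℝⁿ` in the `A`-th coordinate direction. -/
noncomputable def pd {n : ℕ} (A : Fin n) (F : (Fin n → ℝ) → ℝ) : (Fin n → ℝ) → ℝ :=
  fun x => fderiv ℝ F x (Pi.single A 1)

/-- The Laplacian `Δ_ρ F = (1/(2ρ)) Σ_{A,B} ∂_A (ρ E^{AB} ∂_B F)`. -/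
noncomputable def lap {n : ℕ} (E : Matrix (Fin n) (Fin n) ℝ) (ρ F : (Fin n → ℝ) → ℝ) :
    (Fin n → ℝ) → ℝ :=
  fun x => (2 * ρ x)⁻¹ * ∑ A, ∑ B, pd A (fun y => ρ y * E A B * pd B F y) x

/-- `ν(ρ';ρ,E) := √(ρ/ρ') · Δ_ρ (√(ρ'/ρ))`. -/
noncomputable def nu {n : ℕ} (E : Matrix (Fin n) (Fin n) ℝ) (ρ' ρ : (Fin n → ℝ) → ℝ) :
    (Fin n → ℝ) → ℝ :=
  fun x => Real.sqrt (ρ x / ρ' x) * lap E ρ (fun y => Real.sqrt (ρ' y / ρ y)) x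

/-- Key pointwise derivative identity: `ρ₁ ∂_B √(ρ₂/ρ₁) = - ρ₂ ∂_B √(ρ₁/ρ₂)`. -/
lemma key_pd {n : ℕ} (ρ₁ ρ₂ : (Fin n → ℝ) → ℝ)
    (h₁ : ContDiff ℝ (⊤ : ℕ∞) ρ₁) (h₂ : ContDiff ℝ (⊤ : ℕ∞) ρ₂)
    (hp₁ : ∀ x, 0 < ρ₁ x) (hp₂ : ∀ x, 0 < ρ₂ x) (B : Fin n) (x : Fin n → ℝ) :
    ρ₁ x * pd B (fun y => Real.sqrt (ρ₂ y / ρ₁ y)) x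
      = -(ρ₂ x * pd B (fun y => Real.sqrt (ρ₁ y / ρ₂ y)) x) := by
  have ha := hp₁ x
  have hb := hp₂ x
  have hu : DifferentiableAt ℝ (fun y => ρ₁ y / ρ₂ y) x := by
    simp only [div_eq_mul_inv]
    exact (h₁.differentiable (by simp) x).mul ((h₂.differentiable (by simp) x).inv (hp₂ x).ne')
  have hf : HasFDerivAt (fun y => Real.sqrt (ρ₁ y / ρ₂ y))
      ((1 / (2 * Real.sqrt (ρ₁ x / ρ₂ x))) • fderiv ℝ (fun y => ρ₁ y / ρ₂ y) x) x :=
    hu.hasFDerivAt.sqrt (by positivity)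
  have hfx : Real.sqrt (ρ₁ x / ρ₂ x) ≠ 0 := by positivity
  have hg : HasFDerivAt (fun y => (Real.sqrt (ρ₁ y / ρ₂ y))⁻¹)
      ((-(Real.sqrt (ρ₁ x / ρ₂ x) ^ 2)⁻¹) •
        ((1 / (2 * Real.sqrt (ρ₁ x / ρ₂ x))) • fderiv ℝ (fun y => ρ₁ y / ρ₂ y) x)) x :=
    (hasDerivAt_inv hfx).comp_hasFDerivAt x hf
  have hgeq : (fun y => Real.sqrt (ρ₂ y / ρ₁ y)) = fun y => (Real.sqrt (ρ₁ y / ρ₂ y))⁻¹ := by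
    funext y
    rw [← Real.sqrt_inv, inv_div]
  have hsq : Real.sqrt (ρ₁ x / ρ₂ x) ^ 2 = ρ₁ x / ρ₂ x :=
    Real.sq_sqrt (by positivity)
  unfold pd
  rw [hgeq, hg.fderiv, hf.fderiv]
  simp only [ContinuousLinearMap.smul_apply, smul_eq_mul, hsq]
  set D := (fderiv ℝ (fun y => ρ₁ y / ρ₂ y) x) (Pi.single B 1) with hD
  field_simp

/-- antisymmetry of `ν`:
`ν(ρ₁;ρ₂,E) + ν(ρ₂;ρ₁,E) = 0` and `ν(ρ;ρ,E) = 0`. -/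
theorem nu_antisymmetry {n : ℕ} (E : Matrix (Fin n) (Fin n) ℝ)
    (ρ₁ ρ₂ : (Fin n → ℝ) → ℝ)
    (h₁ : ContDiff ℝ (⊤ : ℕ∞) ρ₁) (h₂ : ContDiff ℝ (⊤ : ℕ∞) ρ₂)
    (hp₁ : ∀ x, 0 < ρ₁ x) (hp₂ : ∀ x, 0 < ρ₂ x) :
    (∀ x, nu E ρ₁ ρ₂ x + nu E ρ₂ ρ₁ x = 0) ∧
    (∀ x, nu E ρ₁ ρ₁ x = 0) := by
  constructor
  · intro x
    simp only [nu, lap]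
    have hterm : ∀ (A B : Fin n),
        pd A (fun y => ρ₁ y * E A B * pd B (fun z => Real.sqrt (ρ₂ z / ρ₁ z)) y) x
          = -(pd A (fun y => ρ₂ y * E A B * pd B (fun z => Real.sqrt (ρ₁ z / ρ₂ z)) y) x) := by
      intro A B
      have hfun : (fun y => ρ₁ y * E A B * pd B (fun z => Real.sqrt (ρ₂ z / ρ₁ z)) y)
          = fun y => -(ρ₂ y * E A B * pd B (fun z => Real.sqrt (ρ₁ z / ρ₂ z)) y) := by
        funext y
        have := key_pd ρ₁ ρ₂ h₁ h₂ hp₁ hp₂ B y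
        linear_combination E A B * this
      rw [hfun]
      show fderiv ℝ _ x _ = _
      rw [fderiv_fun_neg]
      simp [pd]
    have hsum :
        (∑ A, ∑ B, pd A (fun y => ρ₁ y * E A B * pd B (fun z => Real.sqrt (ρ₂ z / ρ₁ z)) y) x)
          = -(∑ A, ∑ B, pd A (fun y => ρ₂ y * E A B * pd B (fun z => Real.sqrt (ρ₁ z / ρ₂ z)) y) x) := by
      simp only [hterm, Finset.sum_neg_distrib]
    rw [hsum]
    have key2 : Real.sqrt (ρ₂ x / ρ₁ x) * ρ₁ x = Real.sqrt (ρ₁ x / ρ₂ x) * ρ₂ x := by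
      rw [Real.sqrt_div (hp₂ x).le, Real.sqrt_div (hp₁ x).le, div_mul_eq_mul_div,
        div_mul_eq_mul_div, mul_div_assoc, mul_div_assoc, Real.div_sqrt, Real.div_sqrt]
      ring
    have h1 := (hp₁ x).ne'
    have h2 := (hp₂ x).ne'
    set S := ∑ A, ∑ B, pd A (fun y => ρ₂ y * E A B * pd B (fun z => Real.sqrt (ρ₁ z / ρ₂ z)) y) x
    clear_value S
    field_simp
    linear_combination S * key2
  · intro x
    simp only [nu, lap]
    have hone : (fun y => Real.sqrt (ρ₁ y / ρ₁ y)) = fun _ => (1 : ℝ) := by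
      funext y
      rw [div_self (hp₁ y).ne', Real.sqrt_one]
    rw [hone]
    have hz : ∀ (B : Fin n) (y : Fin n → ℝ), pd B (fun _ : Fin n → ℝ => (1 : ℝ)) y = 0 := by
      intro B y; simp [pd]
    simp [pd, hz]
end

section
/- The difference of two odd Laplacians sharing the same antisymplectic structure E but with different densities ρ and ρ' is the Hamiltonian vector field generated by ln√(ρ'/ρ): Δ_{ρ'} − Δ_ρ = ( ln√(ρ'/ρ) , · ), where ( , ) is the bracket determined by E. -/
/-- The bracket `(F,G) := Σ_{A,B} (∂_A F) E^{AB} (∂_B G)` induced by the bivector `E`. -/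
noncomputable def br {n : ℕ} (E : Matrix (Fin n) (Fin n) ℝ) (F G : (Fin n → ℝ) → ℝ) :
    (Fin n → ℝ) → ℝ :=
  fun x => ∑ A, ∑ B, pd A F x * E A B * pd B G x

lemma pd_mul {n : ℕ} (A : Fin n) (f g : (Fin n → ℝ) → ℝ) (x : Fin n → ℝ)
    (hf : DifferentiableAt ℝ f x) (hg : DifferentiableAt ℝ g x) :
    pd A (fun y => f y * g y) x = f x * pd A g x + g x * pd A f x := by
  unfold pd
  rw [fderiv_fun_mul hf hg]
  simp

lemma pd_const_mul {n : ℕ} (A : Fin n) (c : ℝ) (f : (Fin n → ℝ) → ℝ) (x : Fin n → ℝ)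
    (hf : DifferentiableAt ℝ f x) :
    pd A (fun y => c * f y) x = c * pd A f x := by
  unfold pd
  rw [fderiv_const_mul hf c]
  simp

lemma pd_smooth {n : ℕ} (B : Fin n) (F : (Fin n → ℝ) → ℝ) (hF : ContDiff ℝ (⊤ : ℕ∞) F) :
    ContDiff ℝ (⊤ : ℕ∞) (pd B F) := by
  have h1 : ContDiff ℝ (⊤ : ℕ∞) (fderiv ℝ F) := hF.fderiv_right (by simp)
  exact (ContinuousLinearMap.apply ℝ ℝ (Pi.single B 1 : Fin n → ℝ)).contDiff.comp h1

/-- the difference of two Laplacians sharing the same bivector `E` but with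
different densities `ρ` and `ρ'` is the Hamiltonian vector field generated by
`ln √(ρ'/ρ)`:  `Δ_{ρ'} − Δ_ρ = ( ln √(ρ'/ρ) , · )`. -/
theorem lap_difference_hamiltonian {n : ℕ} (E : Matrix (Fin n) (Fin n) ℝ)
    (ρ' ρ : (Fin n → ℝ) → ℝ)
    (h' : ContDiff ℝ (⊤ : ℕ∞) ρ') (h : ContDiff ℝ (⊤ : ℕ∞) ρ)
    (hp' : ∀ x, 0 < ρ' x) (hp : ∀ x, 0 < ρ x) :
    ∀ F : (Fin n → ℝ) → ℝ, ContDiff ℝ (⊤ : ℕ∞) F →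
      ∀ x, lap E ρ' F x - lap E ρ F x
        = br E (fun y => Real.log (Real.sqrt (ρ' y / ρ y))) F x := by
  intro F hF x
  have hdF : ∀ B : Fin n, DifferentiableAt ℝ (pd B F) x :=
    fun B => (pd_smooth B F hF).differentiable (by simp) x
  -- rewrite the Hamiltonian generator
  have hG : (fun y => Real.log (Real.sqrt (ρ' y / ρ y)))
      = fun y => 2⁻¹ * (Real.log (ρ' y) - Real.log (ρ y)) := by
    funext y
    rw [Real.log_sqrt (le_of_lt (div_pos (hp' y) (hp y))),
      Real.log_div (hp' y).ne' (hp y).ne']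
    ring
  -- derivative of the generator
  have hG2 : ∀ A : Fin n,
      pd A (fun y => 2⁻¹ * (Real.log (ρ' y) - Real.log (ρ y))) x
        = (pd A ρ' x / ρ' x - pd A ρ x / ρ x) / 2 := by
    intro A
    have H := ((((h'.differentiable (by simp) x).hasFDerivAt.log (hp' x).ne').fun_sub
      ((h.differentiable (by simp) x).hasFDerivAt.log (hp x).ne')).const_mul (2⁻¹:ℝ))
    unfold pd
    rw [H.fderiv]
    simp only [ContinuousLinearMap.coe_smul', Pi.smul_apply, ContinuousLinearMap.coe_sub',
      Pi.sub_apply, ContinuousLinearMap.smul_apply, smul_eq_mul]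
    ring
  -- expanding the Laplacian terms
  have key : ∀ (g : (Fin n → ℝ) → ℝ), ContDiff ℝ (⊤ : ℕ∞) g → ∀ A B : Fin n,
      pd A (fun y => g y * E A B * pd B F y) x
        = E A B * (g x * pd A (pd B F) x + pd B F x * pd A g x) := by
    intro g hg A B
    have h1 : (fun y => g y * E A B * pd B F y)
        = fun y => g y * (E A B * pd B F y) := by funext y; ring
    rw [h1, pd_mul A g _ x (hg.differentiable (by simp) x) ((hdF B).const_mul _),
      pd_const_mul A _ _ x (hdF B)]
    ring
  simp only [lap, br, hG, hG2, key ρ' h', key ρ h]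
  simp only [Finset.mul_sum]
  rw [← Finset.sum_sub_distrib]
  refine Finset.sum_congr rfl fun A _ => ?_
  rw [← Finset.sum_sub_distrib]
  refine Finset.sum_congr rfl fun B _ => ?_
  have h1 : ρ' x ≠ 0 := (hp' x).ne'
  have h2 : ρ x ≠ 0 := (hp x).ne'
  field_simp
  ring
end

section
/- Gauge independence of the partition function: if Δ is an odd symmetric operator (∫dμ F(ΔG) = (−1)^{ε_F}∫dμ (ΔF)G), and W, X satisfy Δe^{(i/ħ)W} = 0 and Δe^{(i/ħ)X} = 0, then the first-order variation of Z^X = ∫dμ e^{(i/ħ)(W+X)} under δe^{(i/ħ)X} = [Δ⃗, δΨ] e^{(i/ħ)X} vanishes: ∫dμ e^{(i/ħ)W}[Δ⃗,δΨ]e^{(i/ħ)X} = 0. -/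
/-- gauge independence of the partition function:
if `Δ` is an odd operator, symmetric with respect to the functional `∫dμ` in the sense
`∫dμ F(ΔG) = (−1)^{ε_F} ∫dμ (ΔF)G` (stated separately for even and odd `F`), and the
Boltzmann factors `e^{(i/ħ)W}`, `e^{(i/ħ)X}` (even elements) satisfy the Quantum Master
Equations `Δe^{(i/ħ)W} = 0` and `Δe^{(i/ħ)X} = 0`, then the first-order variation of
`Z^X = ∫dμ e^{(i/ħ)(W+X)}` under `δe^{(i/ħ)X} = [Δ⃗, δΨ] e^{(i/ħ)X}` vanishes:
`∫dμ e^{(i/ħ)W} [Δ⃗, δΨ] e^{(i/ħ)X} = 0`, where `[Δ⃗, δΨ]` is the graded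
(anti)commutator of the odd operator `Δ` with multiplication by the odd element `δΨ`. -/
theorem gauge_independence {A : Type*} [CommRing A] [Algebra ℂ A]
    (intg : A →ₗ[ℂ] ℂ) (Δ : A →ₗ[ℂ] A)
    (Ev Od : Submodule ℂ A)
    (hsymEv : ∀ F G : A, F ∈ Ev → intg (F * Δ G) = intg (Δ F * G))
    (hsymOd : ∀ F G : A, F ∈ Od → intg (F * Δ G) = - intg (Δ F * G))
    (eW eX dPsi : A)
    (heW : eW ∈ Ev) (heX : eX ∈ Ev) (hdPsi : dPsi ∈ Od)
    (hQMEW : Δ eW = 0) (hQMEX : Δ eX = 0) :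
    intg (eW * (Δ (dPsi * eX) + dPsi * Δ eX)) = 0 := by
  have h := hsymEv eW (dPsi * eX) heW
  rw [hQMEW, zero_mul] at h
  rw [hQMEX, mul_zero, add_zero, h, map_zero]
end

section
/- Involution of ω-deformed constraints: suppose constraints G_{α₀} on a space Γ satisfy the involution (G_{α₀}, G_{β₀}) = G_{γ₀} U^{γ₀}_{α₀β₀} and the reducibility relation G_{α₀} Z^{α₀}_{α₁} = 0. Extend the space by conjugate pairs (π_{α₁}, π^{*α₁}) with (π_{α₁}, π^{*β₁})_ext = δ, and let ω^{α₁}_{α₀} be functions of Γ such that the Faddeev–Popov matrix Δ^{α₁}_{β₁} := ω^{α₁}_{α₀}Z^{α₀}_{β₁} is invertible. Then the deformed constraints G_{ω,α₀} := G_{α₀} + π_{α₁}ω^{α₁}_{α₀} are in involution with respect to the extended bracket: (G_{ω,α₀}, G_{ω,β₀})_ext = G_{ω,γ₀} U^{γ₀}_{ω,α₀β₀} for suitable structure functions U_ω, and moreover π_{β₁} = G_{ω,α₀} Z^{α₀}_{α₁} (Δ^{-1})^{α₁}_{β₁}, so the set {G_{ω,α₀}} is irreducible on the extended space. -/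
/-- The bracket `(F,G) := Σ_{A,B} (∂_A F) E^{AB} (∂_B G)` on the original space. -/
noncomputable def brE {n : ℕ} (E : Fin n → Fin n → (Fin n → ℝ) → ℝ)
    (F G : (Fin n → ℝ) → ℝ) : (Fin n → ℝ) → ℝ :=
  fun x => ∑ A, ∑ B, pd A F x * E A B x * pd B G x

/-- Partial `x`-derivative of a function on the extended space `(x, π)`. -/
noncomputable def pdx {n n₁ : ℕ} (A : Fin n)
    (F : (Fin n → ℝ) → (Fin n₁ → ℝ) → ℝ) : (Fin n → ℝ) → (Fin n₁ → ℝ) → ℝ :=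
  fun x p => fderiv ℝ (fun y => F y p) x (Pi.single A 1)

/-- The canonical extension of the bracket to functions of `(x, π)` that do not depend
on the momenta `π*` conjugate to the new variables `π`: on such functions the extended
bracket reduces to the original bracket acting in the `x`-variables. -/
noncomputable def brExt {n n₁ : ℕ} (E : Fin n → Fin n → (Fin n → ℝ) → ℝ)
    (F G : (Fin n → ℝ) → (Fin n₁ → ℝ) → ℝ) : (Fin n → ℝ) → (Fin n₁ → ℝ) → ℝ :=
  fun x p => ∑ A, ∑ B, pdx A F x p * E A B x * pdx B G x p

/-- involution of ω-deformed constraints: if constraints `G_{α₀}`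
satisfy the involution `(G_{α₀},G_{β₀}) = G_{γ₀} U^{γ₀}_{α₀β₀}` and the reducibility
relation `G_{α₀} Z^{α₀}_{α₁} = 0`, and `ω` makes the Faddeev–Popov matrix
`Δ = ωZ` invertible, then the deformed constraints `G_{ω,α₀} = G_{α₀} + π_{α₁}ω^{α₁}_{α₀}`
are in involution with respect to the extended bracket for suitable structure
functions `U_ω`, and `π_{β₁} = G_{ω,α₀} Z^{α₀}_{α₁} (Δ⁻¹)^{α₁}_{β₁}`, so the
`G_{ω,α₀}` are irreducible on the extended space. -/
theorem omega_deformed_involution {n n₀ n₁ : ℕ}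
    (E : Fin n → Fin n → (Fin n → ℝ) → ℝ)
    (hEsm : ∀ A B, ContDiff ℝ (⊤ : ℕ∞) (E A B))
    (hEskew : ∀ A B x, E A B x = - E B A x)
    (G : Fin n₀ → (Fin n → ℝ) → ℝ) (hGsm : ∀ α, ContDiff ℝ (⊤ : ℕ∞) (G α))
    (U : Fin n₀ → Fin n₀ → Fin n₀ → (Fin n → ℝ) → ℝ)
    (Z : Fin n₀ → Fin n₁ → (Fin n → ℝ) → ℝ) (hZsm : ∀ α a, ContDiff ℝ (⊤ : ℕ∞) (Z α a))
    (ω : Fin n₁ → Fin n₀ → (Fin n → ℝ) → ℝ) (hωsm : ∀ a α, ContDiff ℝ (⊤ : ℕ∞) (ω a α))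
    (hinvol : ∀ α β x, brE E (G α) (G β) x = ∑ γ, G γ x * U γ α β x)
    (hreduc : ∀ a x, ∑ α, G α x * Z α a x = 0)
    (Δinv : Fin n₁ → Fin n₁ → (Fin n → ℝ) → ℝ)
    (hΔ₁ : ∀ a b x, ∑ c, (∑ α, ω a α x * Z α c x) * Δinv c b x = if a = b then 1 else 0)
    (hΔ₂ : ∀ a b x, ∑ c, Δinv a c x * (∑ α, ω c α x * Z α b x) = if a = b then 1 else 0)
    (Gω : Fin n₀ → (Fin n → ℝ) → (Fin n₁ → ℝ) → ℝ)
    (hGω : ∀ α x p, Gω α x p = G α x + ∑ a, p a * ω a α x) :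
    (∃ Uω : Fin n₀ → Fin n₀ → Fin n₀ → (Fin n → ℝ) → (Fin n₁ → ℝ) → ℝ,
      ∀ α β x p, brExt E (Gω α) (Gω β) x p = ∑ γ, Gω γ x p * Uω γ α β x p) ∧
    (∀ b x p, p b = ∑ α, ∑ a, Gω α x p * Z α a x * Δinv a b x) := by

  -- derivative of the deformed constraints in the x-directions
  have hpdx : ∀ γ (A : Fin n) (x : Fin n → ℝ) (p : Fin n₁ → ℝ),
      pdx A (Gω γ) x p = pd A (G γ) x + ∑ a, p a * pd A (ω a γ) x := by
    intro γ A x p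
    have hd : HasFDerivAt (fun y => G γ y + ∑ a : Fin n₁, p a * ω a γ y)
        (fderiv ℝ (G γ) x + ∑ a : Fin n₁, p a • fderiv ℝ (ω a γ) x) x := by
      refine HasFDerivAt.add (((hGsm γ).differentiable (by simp) x).hasFDerivAt) ?_
      exact HasFDerivAt.fun_sum fun a _ =>
        ((((hωsm a γ).differentiable (by simp) x).hasFDerivAt).const_mul (p a))
    have hfun : (fun y => Gω γ y p) = fun y => G γ y + ∑ a : Fin n₁, p a * ω a γ y := by
      funext y; exact hGω γ y p
    simp only [pdx, hfun, hd.fderiv, ContinuousLinearMap.add_apply,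
      ContinuousLinearMap.sum_apply, ContinuousLinearMap.smul_apply, smul_eq_mul, pd]
  -- part 2: recovering the momenta p from the deformed constraints
  have hpart2 : ∀ (b : Fin n₁) x p, p b = ∑ α, ∑ a, Gω α x p * Z α a x * Δinv a b x := by
    intro b x p
    have key : ∀ a, ∑ α, Gω α x p * Z α a x = ∑ c, p c * ∑ α, ω c α x * Z α a x := by
      intro a
      have h1 : ∀ α, Gω α x p * Z α a x
          = G α x * Z α a x + ∑ c, p c * (ω c α x * Z α a x) := by
        intro α
        rw [hGω, add_mul, Finset.sum_mul]
        congr 1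
        exact Finset.sum_congr rfl fun c _ => by ring
      calc ∑ α, Gω α x p * Z α a x
          = ∑ α, (G α x * Z α a x + ∑ c, p c * (ω c α x * Z α a x)) :=
            Finset.sum_congr rfl fun α _ => h1 α
        _ = (∑ α, G α x * Z α a x) + ∑ α, ∑ c, p c * (ω c α x * Z α a x) :=
            Finset.sum_add_distrib
        _ = ∑ c, ∑ α, p c * (ω c α x * Z α a x) := by
            rw [hreduc a x, zero_add, Finset.sum_comm]
        _ = ∑ c, p c * ∑ α, ω c α x * Z α a x :=
            Finset.sum_congr rfl fun c _ => (Finset.mul_sum _ _ _).symm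
    symm
    calc ∑ α, ∑ a, Gω α x p * Z α a x * Δinv a b x
        = ∑ a, (∑ α, Gω α x p * Z α a x) * Δinv a b x := by
          rw [Finset.sum_comm]
          exact Finset.sum_congr rfl fun a _ => (Finset.sum_mul _ _ _).symm
      _ = ∑ a, (∑ c, p c * ∑ α, ω c α x * Z α a x) * Δinv a b x :=
          Finset.sum_congr rfl fun a _ => by rw [key a]
      _ = ∑ c, p c * ∑ a, (∑ α, ω c α x * Z α a x) * Δinv a b x := by
          simp only [Finset.sum_mul]
          rw [Finset.sum_comm]
          exact Finset.sum_congr rfl fun c _ => by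
            rw [Finset.mul_sum]
            exact Finset.sum_congr rfl fun a _ => by rw [mul_assoc, Finset.sum_mul]
      _ = p b := by simp [hΔ₁]
  refine ⟨⟨fun γ α β x p => U γ α β x + ∑ a, ∑ c, Z γ c x * Δinv c a x *
      ((∑ A, ∑ B, pd A (G α) x * E A B x * pd B (ω a β) x)
        + (∑ A, ∑ B, pd A (ω a α) x * E A B x * pdx B (Gω β) x p)
        - ∑ δ, ω a δ x * U δ α β x), ?_⟩, hpart2⟩
  intro α β x p
  -- abbreviations
  have hsnd : ∀ (Tv : Fin n₁ → ℝ),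
      ∑ γ, Gω γ x p * (∑ a, ∑ c, Z γ c x * Δinv c a x * Tv a) = ∑ a, p a * Tv a := by
    intro Tv
    calc ∑ γ, Gω γ x p * (∑ a, ∑ c, Z γ c x * Δinv c a x * Tv a)
        = ∑ γ, ∑ a, ∑ c, Gω γ x p * Z γ c x * Δinv c a x * Tv a := by
          refine Finset.sum_congr rfl fun γ _ => ?_
          rw [Finset.mul_sum]
          refine Finset.sum_congr rfl fun a _ => ?_
          rw [Finset.mul_sum]
          exact Finset.sum_congr rfl fun c _ => by ring
      _ = ∑ a, ∑ γ, ∑ c, Gω γ x p * Z γ c x * Δinv c a x * Tv a := Finset.sum_comm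
      _ = ∑ a, (∑ γ, ∑ c, Gω γ x p * Z γ c x * Δinv c a x) * Tv a := by
          refine Finset.sum_congr rfl fun a _ => ?_
          rw [Finset.sum_mul]
          exact Finset.sum_congr rfl fun γ _ => (Finset.sum_mul _ _ _).symm
      _ = ∑ a, p a * Tv a :=
          Finset.sum_congr rfl fun a _ => by rw [← hpart2 a x p]
  have hfst : ∑ γ, Gω γ x p * U γ α β x
      = (∑ γ, G γ x * U γ α β x) + ∑ a, p a * ∑ γ, ω a γ x * U γ α β x := by
    calc ∑ γ, Gω γ x p * U γ α β x
        = ∑ γ, (G γ x * U γ α β x + ∑ a, p a * (ω a γ x * U γ α β x)) := by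
          refine Finset.sum_congr rfl fun γ _ => ?_
          rw [hGω, add_mul, Finset.sum_mul]
          congr 1
          exact Finset.sum_congr rfl fun a _ => by ring
      _ = (∑ γ, G γ x * U γ α β x) + ∑ γ, ∑ a, p a * (ω a γ x * U γ α β x) :=
          Finset.sum_add_distrib
      _ = (∑ γ, G γ x * U γ α β x) + ∑ a, p a * ∑ γ, ω a γ x * U γ α β x := by
          congr 1
          rw [Finset.sum_comm]
          exact Finset.sum_congr rfl fun a _ => (Finset.mul_sum _ _ _).symm
  -- expand the left-hand side
  have expand : brExt E (Gω α) (Gω β) x p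
      = brE E (G α) (G β) x
        + ∑ a, p a * ((∑ A, ∑ B, pd A (G α) x * E A B x * pd B (ω a β) x)
            + (∑ A, ∑ B, pd A (ω a α) x * E A B x * pdx B (Gω β) x p)) := by
    have step1 : brExt E (Gω α) (Gω β) x p
        = (∑ A, ∑ B, pd A (G α) x * E A B x * pdx B (Gω β) x p)
          + ∑ a, p a * ∑ A, ∑ B, pd A (ω a α) x * E A B x * pdx B (Gω β) x p := by
      calc brExt E (Gω α) (Gω β) x p
          = ∑ A, ∑ B, (pd A (G α) x * E A B x * pdx B (Gω β) x p
              + ∑ a, p a * (pd A (ω a α) x * E A B x * pdx B (Gω β) x p)) := by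
            refine Finset.sum_congr rfl fun A _ => Finset.sum_congr rfl fun B _ => ?_
            rw [hpdx α A x p, add_mul, add_mul, Finset.sum_mul, Finset.sum_mul]
            congr 1
            exact Finset.sum_congr rfl fun a _ => by ring
        _ = (∑ A, ∑ B, pd A (G α) x * E A B x * pdx B (Gω β) x p)
              + ∑ A, ∑ B, ∑ a, p a * (pd A (ω a α) x * E A B x * pdx B (Gω β) x p) := by
            rw [← Finset.sum_add_distrib]
            exact Finset.sum_congr rfl fun A _ => Finset.sum_add_distrib
        _ = (∑ A, ∑ B, pd A (G α) x * E A B x * pdx B (Gω β) x p)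
              + ∑ a, p a * ∑ A, ∑ B, pd A (ω a α) x * E A B x * pdx B (Gω β) x p := by
            congr 1
            calc ∑ A, ∑ B, ∑ a, p a * (pd A (ω a α) x * E A B x * pdx B (Gω β) x p)
                = ∑ A, ∑ a, ∑ B, p a * (pd A (ω a α) x * E A B x * pdx B (Gω β) x p) :=
                  Finset.sum_congr rfl fun A _ => Finset.sum_comm
              _ = ∑ a, ∑ A, ∑ B, p a * (pd A (ω a α) x * E A B x * pdx B (Gω β) x p) :=
                  Finset.sum_comm
              _ = ∑ a, p a * ∑ A, ∑ B, pd A (ω a α) x * E A B x * pdx B (Gω β) x p := by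
                  refine Finset.sum_congr rfl fun a _ => ?_
                  rw [Finset.mul_sum]
                  exact Finset.sum_congr rfl fun A _ => (Finset.mul_sum _ _ _).symm
    have step2 : (∑ A, ∑ B, pd A (G α) x * E A B x * pdx B (Gω β) x p)
        = brE E (G α) (G β) x
          + ∑ a, p a * ∑ A, ∑ B, pd A (G α) x * E A B x * pd B (ω a β) x := by
      calc ∑ A, ∑ B, pd A (G α) x * E A B x * pdx B (Gω β) x p
          = ∑ A, ∑ B, (pd A (G α) x * E A B x * pd B (G β) x
              + ∑ a, p a * (pd A (G α) x * E A B x * pd B (ω a β) x)) := by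
            refine Finset.sum_congr rfl fun A _ => Finset.sum_congr rfl fun B _ => ?_
            rw [hpdx β B x p, mul_add, Finset.mul_sum]
            congr 1
            exact Finset.sum_congr rfl fun a _ => by ring
        _ = brE E (G α) (G β) x
              + ∑ A, ∑ B, ∑ a, p a * (pd A (G α) x * E A B x * pd B (ω a β) x) := by
            simp only [brE]
            rw [← Finset.sum_add_distrib]
            exact Finset.sum_congr rfl fun A _ => Finset.sum_add_distrib
        _ = brE E (G α) (G β) x
              + ∑ a, p a * ∑ A, ∑ B, pd A (G α) x * E A B x * pd B (ω a β) x := by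
            congr 1
            calc ∑ A, ∑ B, ∑ a, p a * (pd A (G α) x * E A B x * pd B (ω a β) x)
                = ∑ A, ∑ a, ∑ B, p a * (pd A (G α) x * E A B x * pd B (ω a β) x) :=
                  Finset.sum_congr rfl fun A _ => Finset.sum_comm
              _ = ∑ a, ∑ A, ∑ B, p a * (pd A (G α) x * E A B x * pd B (ω a β) x) :=
                  Finset.sum_comm
              _ = ∑ a, p a * ∑ A, ∑ B, pd A (G α) x * E A B x * pd B (ω a β) x := by
                  refine Finset.sum_congr rfl fun a _ => ?_
                  rw [Finset.mul_sum]
                  exact Finset.sum_congr rfl fun A _ => (Finset.mul_sum _ _ _).symm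
    rw [step1, step2, add_assoc, ← Finset.sum_add_distrib]
    congr 1
    exact Finset.sum_congr rfl fun a _ => by rw [← mul_add]
  -- put everything together
  calc brExt E (Gω α) (Gω β) x p
      = brE E (G α) (G β) x
        + ∑ a, p a * ((∑ A, ∑ B, pd A (G α) x * E A B x * pd B (ω a β) x)
            + (∑ A, ∑ B, pd A (ω a α) x * E A B x * pdx B (Gω β) x p)) := expand
    _ = (∑ γ, G γ x * U γ α β x)
        + ∑ a, p a * ((∑ A, ∑ B, pd A (G α) x * E A B x * pd B (ω a β) x)
            + (∑ A, ∑ B, pd A (ω a α) x * E A B x * pdx B (Gω β) x p)) := by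
        rw [hinvol α β x]
    _ = ((∑ γ, G γ x * U γ α β x) + ∑ a, p a * ∑ γ, ω a γ x * U γ α β x)
        + ∑ a, p a * ((∑ A, ∑ B, pd A (G α) x * E A B x * pd B (ω a β) x)
            + (∑ A, ∑ B, pd A (ω a α) x * E A B x * pdx B (Gω β) x p)
            - ∑ δ, ω a δ x * U δ α β x) := by
        rw [add_assoc, ← Finset.sum_add_distrib]
        congr 2
        funext a
        ring
    _ = (∑ γ, Gω γ x p * U γ α β x)
        + ∑ γ, Gω γ x p * (∑ a, ∑ c, Z γ c x * Δinv c a x *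
          ((∑ A, ∑ B, pd A (G α) x * E A B x * pd B (ω a β) x)
            + (∑ A, ∑ B, pd A (ω a α) x * E A B x * pdx B (Gω β) x p)
            - ∑ δ, ω a δ x * U δ α β x)) := by
        rw [hfst, hsnd (fun a => (∑ A, ∑ B, pd A (G α) x * E A B x * pd B (ω a β) x)
            + (∑ A, ∑ B, pd A (ω a α) x * E A B x * pdx B (Gω β) x p)
            - ∑ δ, ω a δ x * U δ α β x)]
    _ = ∑ γ, Gω γ x p * (U γ α β x + ∑ a, ∑ c, Z γ c x * Δinv c a x *
          ((∑ A, ∑ B, pd A (G α) x * E A B x * pd B (ω a β) x)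
            + (∑ A, ∑ B, pd A (ω a α) x * E A B x * pdx B (Gω β) x p)
            - ∑ δ, ω a δ x * U δ α β x)) := by
        rw [← Finset.sum_add_distrib]
        exact Finset.sum_congr rfl fun γ _ => (mul_add _ _ _).symm
end
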